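/- arXiv:1009.2316 — 2 statements merged into one kernel-verified Lean document; each statement's English description precedes it below -/
import Mathlib

section
/- Let n be a positive even integer, let V_1,…,V_q be (n−1)-dimensional oriented subspaces of ℝⁿ (q ∈ ℕ arbitrary), and let F be a complete oriented flag in ℝⁿ. Then there exists x ∈ ℝⁿ ∖ (V_1 ∪ ⋯ ∪ V_q) such that ori(V_i ⊕ ⟨x⟩) = ori([V_i, F]) for every i = 1,…,q. -/
noncomputable section

/-- Sign of the determinant of the matrix whose columns are `v 0, …, v (n-1)`. -/
def oriV {n : ℕ} (v : Fin n → (Fin n → ℝ)) : ℝ :=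
  Real.sign (Matrix.det (Matrix.of fun i j => v j i))

open Classical in
/-- We represent a complete oriented flag `F` in `ℝⁿ` by a basis `(F 0, …, F (n-1))`:
the flag is `Fⁱ = span(F 0, …, F (i-1))`, oriented by this basis, with the positive
half-space `(Fⁱ)⁺` the one containing `F (i-1)`.  Two bases represent the same
oriented flag iff the transition matrix is upper triangular with positive diagonal.

Given a tuple `W` representing an oriented subspace `⟨W 0, …, W (k-1)⟩` and a flag `F`,
`extVec W F` is the first vector `F d` of the flag not contained in `span W`; it is a
vector of the positive half-space `(F^{d+1})⁺`, so `snoc W (extVec W F)` represents the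
oriented subspace `[⟨W⟩, F]` of Bucher–Monod. -/
def extVec {n k : ℕ} (W : Fin k → (Fin n → ℝ)) (F : Fin n → (Fin n → ℝ)) : Fin n → ℝ :=
  match Fin.find? (fun j => decide (F j ∉ Submodule.span ℝ (Set.range W))) with
  | some j => F j
  | none => 0

/-- `bracket (F_1, …, F_k)` is (the canonical representing tuple of) the oriented
`k`-dimensional subspace `[F_1, …, F_k]`, defined inductively by `[F_1] = F_1¹` and
`[F_1,…,F_k] = [[F_1,…,F_{k-1}], F_k]`. -/
def bracket {n : ℕ} : {k : ℕ} → (Fin k → (Fin n → (Fin n → ℝ))) → (Fin k → (Fin n → ℝ))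
  | 0, _ => Fin.elim0
  | (_ + 1), Fs =>
      Fin.snoc (bracket (Fs ∘ Fin.castSucc))
        (extVec (bracket (Fs ∘ Fin.castSucc)) (Fs (Fin.last _)))

/-- `coco(F_0,…,F_n) = ∏_{i=0}^{n} ori([F_0,…,F̂_i,…,F_n])`. -/
def coco {n : ℕ} (Fs : Fin (n + 1) → (Fin n → (Fin n → ℝ))) : ℝ :=
  ∏ i : Fin (n + 1), oriV (bracket (Fs ∘ i.succAbove))


/-!
Take `x = ∑ⱼ εʲ Fⱼ` for a small `ε > 0`. For the hyperplane `Vᵢ`, the linear form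
`y ↦ det(Vᵢ, y)` vanishes on `F₀, …, F_{d-1}` and not on `F_d`, where `F_d` is the vector
used by `[Vᵢ, F]`; hence `det(Vᵢ, x) = εᵈ (det(Vᵢ, F_d) + O(ε))` has the sign of
`det(Vᵢ, F_d)`. Only finitely many hyperplanes are involved, so one `ε` serves them all.
-/

open Filter Topology Submodule

theorem eventually_pos_mul_sum_pow_mul {N : ℕ} (c : Fin N → ℝ) {d : Fin N} (hd : c d ≠ 0)
    (hlt : ∀ j < d, c j = 0) :
    ∀ᶠ ε in 𝓝[>] (0 : ℝ), 0 < c d * ∑ j : Fin N, ε ^ (j : ℕ) * c j := by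
  set g : ℝ → ℝ := fun ε => c d * ∑ j : Fin N, ε ^ ((j : ℕ) - d) * c j
  have hfactor : ∀ ε : ℝ, ∑ j : Fin N, ε ^ (j : ℕ) * c j =
      ε ^ (d : ℕ) * ∑ j : Fin N, ε ^ ((j : ℕ) - d) * c j := by
    intro ε
    rw [Finset.mul_sum]
    refine Finset.sum_congr rfl fun j _ => ?_
    rcases lt_or_ge j d with h | h
    · simp [hlt j h]
    · rw [← mul_assoc, ← pow_add, Nat.add_sub_cancel' (Fin.le_iff_val_le_val.1 h)]
  have hg0 : 0 < g 0 := by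
    have hsum : ∑ j : Fin N, (0 : ℝ) ^ ((j : ℕ) - d) * c j = c d := by
      refine (Finset.sum_eq_single d (fun j _ hj => ?_) (by simp)).trans (by simp)
      rcases lt_or_gt_of_ne hj with h | h
      · rw [hlt j h, mul_zero]
      · rw [zero_pow (by omega), zero_mul]
    simpa [g, hsum] using mul_self_pos.2 hd
  have hg : Continuous g := by fun_prop
  filter_upwards [nhdsWithin_le_nhds (hg.continuousAt.eventually (lt_mem_nhds hg0)),
    self_mem_nhdsWithin] with ε hε hεpos
  rw [hfactor, mul_left_comm]
  exact mul_pos (pow_pos hεpos _) hε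

theorem exists_pos_mul_apply_of_first_ne_zero {M ι : Type*} [AddCommGroup M] [Module ℝ M]
    [Finite ι] {N : ℕ} (φ : ι → M →ₗ[ℝ] ℝ) (F : Fin N → M) (d : ι → Fin N)
    (hd : ∀ i, φ i (F (d i)) ≠ 0) (hlt : ∀ i, ∀ j < d i, φ i (F j) = 0) :
    ∃ x, ∀ i, 0 < φ i (F (d i)) * φ i x := by
  have hev : ∀ᶠ ε in 𝓝[>] (0 : ℝ),
      ∀ i, 0 < φ i (F (d i)) * ∑ j : Fin N, ε ^ (j : ℕ) * φ i (F j) :=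
    eventually_all.2 fun i => eventually_pos_mul_sum_pow_mul _ (hd i) (hlt i)
  obtain ⟨ε, hε⟩ := hev.exists
  exact ⟨∑ j : Fin N, ε ^ (j : ℕ) • F j,
    fun i => by simpa only [map_sum, map_smul, smul_eq_mul] using hε i⟩

theorem sign_eq_sign_of_mul_pos {a b : ℝ} (h : 0 < a * b) : Real.sign a = Real.sign b := by
  rcases pos_and_pos_or_neg_and_neg_of_mul_pos h with ⟨ha, hb⟩ | ⟨ha, hb⟩
  · rw [Real.sign_of_pos ha, Real.sign_of_pos hb]
  · rw [Real.sign_of_neg ha, Real.sign_of_neg hb]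

theorem exists_apply_notMem_span_range {K M ι κ : Type*} [DivisionRing K] [AddCommGroup M]
    [Module K M] [Fintype κ] {F : ι → M} (hF : span K (Set.range F) = ⊤) (W : κ → M)
    (hW : Fintype.card κ < Module.finrank K M) : ∃ j, F j ∉ span K (Set.range W) := by
  by_contra! h
  have htop : span K (Set.range W) = ⊤ :=
    eq_top_iff.2 (hF ▸ span_le.2 (Set.range_subset_iff.2 h))
  have hle := finrank_range_le_card (R := K) W
  rw [Set.finrank, htop, finrank_top] at hle
  omega

theorem extVec_spec {n k : ℕ} (W : Fin k → Fin n → ℝ) (F : Fin n → Fin n → ℝ)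
    (h : ∃ j, F j ∉ span ℝ (Set.range W)) :
    ∃ d, extVec W F = F d ∧ F d ∉ span ℝ (Set.range W) ∧
      ∀ j < d, F j ∈ span ℝ (Set.range W) := by
  classical
  obtain ⟨j₀, hj₀⟩ := h
  obtain ⟨d, hfind⟩ := Option.isSome_iff_exists.1 (Fin.isSome_find?_of_eq_true
    (p := fun j => decide (F j ∉ span ℝ (Set.range W))) (i := j₀) (by simpa using hj₀))
  have hmem := Fin.mem_find?_iff.1 (Option.mem_def.2 hfind)
  refine ⟨d, ?_, by simpa using hmem.1, fun j hj => by simpa using hmem.2 j hj⟩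
  unfold extVec
  rw [hfind]

def detSnoc {m : ℕ} (W : Fin m → Fin (m + 1) → ℝ) : (Fin (m + 1) → ℝ) →ₗ[ℝ] ℝ :=
  Matrix.detRowAlternating.toMultilinearMap.toLinearMap (Fin.snoc W 0) (Fin.last m)

theorem detSnoc_apply {m : ℕ} (W : Fin m → Fin (m + 1) → ℝ) (y : Fin (m + 1) → ℝ) :
    detSnoc W y = (Matrix.of (Fin.snoc W y)).det := by
  show Matrix.detRowAlternating (Function.update (Fin.snoc W 0) (Fin.last m) y) = _
  rw [Fin.update_snoc_last]
  rfl

theorem oriV_snoc {m : ℕ} (W : Fin m → Fin (m + 1) → ℝ) (y : Fin (m + 1) → ℝ) :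
    oriV (Fin.snoc W y) = Real.sign (detSnoc W y) := by
  rw [detSnoc_apply, ← Matrix.det_transpose]
  rfl

theorem detSnoc_eq_zero_iff {m : ℕ} {W : Fin m → Fin (m + 1) → ℝ}
    (hW : LinearIndependent ℝ W) (y : Fin (m + 1) → ℝ) :
    detSnoc W y = 0 ↔ y ∈ span ℝ (Set.range W) := by
  rw [← not_iff_not, detSnoc_apply, ← ne_eq, ← isUnit_iff_ne_zero,
    ← Matrix.isUnit_iff_isUnit_det, ← Matrix.linearIndependent_rows_iff_isUnit]
  exact linearIndependent_finSnoc.trans (and_iff_right hW)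

/-- given `(n−1)`-dimensional oriented subspaces `V_1,…,V_q` of `ℝⁿ`
(represented by linearly independent `(n-1)`-tuples) and a complete oriented flag `F`,
there is `x ∈ ℝⁿ ∖ (V_1 ∪ ⋯ ∪ V_q)` with `ori(V_i ⊕ ⟨x⟩) = ori([V_i, F])` for all `i`. -/
theorem stmt10 (n : ℕ) (hn : 0 < n) (q : ℕ)
    (V : Fin q → (Fin (n - 1) → (Fin n → ℝ))) (hV : ∀ i, LinearIndependent ℝ (V i))
    (F : Fin n → (Fin n → ℝ)) (hF : LinearIndependent ℝ F) :
    ∃ x : Fin n → ℝ,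
      (∀ i, x ∉ Submodule.span ℝ (Set.range (V i))) ∧
      (∀ i, oriV ((Fin.snoc (V i) x) ∘ Fin.cast (by omega : n = n - 1 + 1)) =
        oriV ((Fin.snoc (V i) (extVec (V i) F)) ∘ Fin.cast (by omega : n = n - 1 + 1))) := by
  obtain ⟨m, rfl⟩ : ∃ m, n = m + 1 := ⟨n - 1, by omega⟩
  have hspan : Submodule.span ℝ (Set.range F) = ⊤ :=
    hF.span_eq_top_of_card_eq_finrank (by simp)
  choose d hdF hdout hdin using fun i =>
    extVec_spec (V i) F (exists_apply_notMem_span_range hspan (V i) (by simp))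
  obtain ⟨x, hx⟩ := exists_pos_mul_apply_of_first_ne_zero (fun i => detSnoc (V i)) F d
    (fun i => mt (detSnoc_eq_zero_iff (hV i) _).1 (hdout i))
    (fun i j hj => (detSnoc_eq_zero_iff (hV i) _).2 (hdin i j hj))
  refine ⟨x, fun i hxi => ?_, fun i => ?_⟩
  · have hpos := hx i
    rw [(detSnoc_eq_zero_iff (hV i) x).2 hxi, mul_zero] at hpos
    exact hpos.false
  · show oriV (Fin.snoc (V i) x) = oriV (Fin.snoc (V i) (extVec (V i) F))
    rw [oriV_snoc, oriV_snoc, hdF i]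
    exact (sign_eq_sign_of_mul_pos (hx i)).symm

end
end

section
/- Let n be a positive even integer. Then for all v_0,…,v_n ∈ ℝⁿ: pcoc(v_0,…,v_n) = (−1)^{n/2} · 2^n · smi(v_0,…,v_n). -/
noncomputable section

/-- A `k`-tuple of vectors of `ℝⁿ` is hereditarily spanning if every subcollection of `n`
of its entries spans `ℝⁿ`. -/
def HerSpan {n k : ℕ} (v : Fin k → (Fin n → ℝ)) : Prop :=
  ∀ s : Finset (Fin k), s.card = n → Submodule.span ℝ (v '' ↑s) = ⊤

open Classical in
/-- The Sullivan cocycle: `sul(v_0,…,v_n) = 0` unless `0` lies in the interior of the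
convex hull of `{v_0,…,v_n}`, in which case `sul(v_0,…,v_n) = (−1)^i ori(v_0,…,v̂_i,…,v_n)`
(independent of `i`; we take `i = 0`). -/
def sul {n : ℕ} (v : Fin (n + 1) → (Fin n → ℝ)) : ℝ :=
  if (0 : Fin n → ℝ) ∈ interior (convexHull ℝ (Set.range v)) then
    oriV (v ∘ (0 : Fin (n + 1)).succAbove)
  else 0

/-- Smillie's averaged cocycle: `smi(v_0,…,v_n) = 2^{−(n+1)} ∑_{σ ∈ {±1}^{n+1}}
sul(σ_0 v_0, …, σ_n v_n)`. -/
def smi {n : ℕ} (v : Fin (n + 1) → (Fin n → ℝ)) : ℝ :=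
  ((2 : ℝ) ^ (n + 1))⁻¹ *
    ∑ σ : Fin (n + 1) → Bool, sul (fun i => (if σ i then (1 : ℝ) else -1) • v i)

/-- `pcoc(v_0,…,v_n) = ∏_{i=0}^{n} ori(v_0,…,v̂_i,…,v_n)`. -/
def pcoc {n : ℕ} (v : Fin (n + 1) → (Fin n → ℝ)) : ℝ :=
  ∏ i : Fin (n + 1), oriV (v ∘ i.succAbove)

/-!
Laplace expansion gives the linear relation `∑ i, (-1)^i det_i • v i = 0`, where `det_i` is the
maximal minor omitting `v i`. When all minors are nonzero this is, up to scaling, the only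
relation, so `0` is interior to the convex hull of the `σ_i v_i` (`σ_i = ±1`) exactly when the
numbers `σ_i (-1)^i det_i` all have the same sign. Hence only the two sign vectors
`σ = ±sign((-1)^i det_i)` contribute to `smi`, and for `n` even both contribute
`∏ i, sign((-1)^i det_i)`, which is `pcoc` up to `∏ i, (-1)^i = (-1)^(n/2)`. When some minor
vanishes, both sides are zero.
-/

open Finset

section LinearRelations

variable {k V : Type*} [Field k] [AddCommGroup V] [Module k V] {n : ℕ} {w : Fin (n + 1) → V}

theorem smul_eq_smul_of_sum_smul_eq_zero {i : Fin (n + 1)}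
    (hw : LinearIndependent k (w ∘ i.succAbove)) {c g : Fin (n + 1) → k}
    (hc : ∑ j, c j • w j = 0) (hg : ∑ j, g j • w j = 0) : c i • g = g i • c := by
  set h := c i • g - g i • c with h_def
  have hhi : h i = 0 := by simp only [h_def, Pi.sub_apply, Pi.smul_apply, smul_eq_mul]; ring
  have hh : ∑ l, h (i.succAbove l) • (w ∘ i.succAbove) l = 0 := by
    have : ∑ j, h j • w j = 0 := by
      simp only [h_def, Pi.sub_apply, Pi.smul_apply, smul_eq_mul, sub_smul, mul_smul,
        sum_sub_distrib, ← smul_sum, hc, hg, smul_zero, sub_zero]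
    rwa [Fin.sum_univ_succAbove _ i, hhi, zero_smul, zero_add] at this
  have hsucc := Fintype.linearIndependent_iff.mp hw _ hh
  rw [← sub_eq_zero]
  funext j
  rcases Fin.eq_self_or_eq_succAbove i j with rfl | ⟨l, rfl⟩
  · exact hhi
  · exact hsucc l

variable [LinearOrder k] [IsStrictOrderedRing k]

theorem affineIndependent_iff_linearIndependent_comp_succAbove {μ : Fin (n + 1) → k}
    (hμ : ∀ j, 0 < μ j) (hrel : ∑ j, μ j • w j = 0) (i : Fin (n + 1)) :
    AffineIndependent k w ↔ LinearIndependent k (w ∘ i.succAbove) := by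
  have hs : 0 < ∑ j, μ j := sum_pos (fun j _ => hμ j) univ_nonempty
  constructor
  · intro hw
    rw [Fintype.linearIndependent_iff]
    intro g hg l
    set h : Fin (n + 1) → k := Fin.insertNth i 0 g with h_def
    set t := (∑ j, h j) / ∑ j, μ j
    -- `h` and `t • μ` are two relations with the same total weight
    have heq := hw.eq_of_sum_eq_sum (s := univ) (w₁ := h) (w₂ := t • μ)
      (by simp [t, ← mul_sum, hs.ne'])
      (by
        rw [show ∑ j, (t • μ) j • w j = t • ∑ j, μ j • w j by simp [mul_smul, smul_sum], hrel,
          smul_zero]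
        simpa [Fin.sum_univ_succAbove _ i, h_def] using hg)
    have ht : t = 0 := by
      simpa [h_def, (hμ i).ne'] using heq i (mem_univ i)
    simpa [h_def, ht] using heq (i.succAbove l) (mem_univ _)
  · intro hw
    rw [affineIndependent_iff_of_fintype]
    intro g hg0 hgw
    rw [univ.weightedVSub_eq_linear_combination hg0] at hgw
    have key := smul_eq_smul_of_sum_smul_eq_zero hw hrel hgw
    have hgi : g i = 0 := by
      have := congrArg (fun f => ∑ j, f j) key
      simp only [Pi.smul_apply, smul_eq_mul, ← mul_sum, hg0, mul_zero] at this
      exact (mul_eq_zero.mp this.symm).resolve_right hs.ne'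
    intro j
    simpa [hgi, (hμ i).ne'] using congrFun key j

end LinearRelations

section ConvexGeometry

variable {E : Type*} [NormedAddCommGroup E] [NormedSpace ℝ E] [FiniteDimensional ℝ E]

theorem zero_mem_interior_convexHull_iff {ι : Type*} [Fintype ι]
    (hι : Fintype.card ι = Module.finrank ℝ E + 1) (w : ι → E) :
    (0 : E) ∈ interior (convexHull ℝ (Set.range w)) ↔
      AffineIndependent ℝ w ∧ ∃ μ : ι → ℝ, (∀ i, 0 < μ i) ∧ ∑ i, μ i • w i = 0 := by
  constructor
  · intro h
    have hspan : affineSpan ℝ (Set.range w) = ⊤ :=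
      interior_convexHull_nonempty_iff_affineSpan_eq_top.mp ⟨0, h⟩
    have hind : AffineIndependent ℝ w := by
      rw [affineIndependent_iff_finrank_vectorSpan_eq ℝ w hι,
        AffineSubspace.vectorSpan_eq_top_of_affineSpan_eq_top ℝ E E hspan, finrank_top]
    let b : AffineBasis ι ℝ E := ⟨w, hind, hspan⟩
    rw [show Set.range w = Set.range b from rfl, b.interior_convexHull] at h
    exact ⟨hind, fun i => b.coord i 0, h, b.linear_combination_coord_eq_self 0⟩
  · rintro ⟨hind, μ, hμ, hrel⟩
    let b : AffineBasis ι ℝ E :=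
      ⟨w, hind, hind.affineSpan_eq_top_iff_card_eq_finrank_add_one.mpr hι⟩
    have : Nonempty ι := Fintype.card_pos_iff.mp (by omega)
    have hs : 0 < ∑ i, μ i := sum_pos (fun i _ => hμ i) univ_nonempty
    have hw : ∑ i, μ i / ∑ j, μ j = 1 := by rw [← sum_div, div_self hs.ne']
    have h0 : univ.affineCombination ℝ b (fun i => μ i / ∑ j, μ j) = 0 := by
      rw [affineCombination_eq_linear_combination _ _ _ hw]
      simp_rw [div_eq_inv_mul, mul_smul, ← smul_sum]
      exact (congrArg _ hrel).trans (smul_zero _)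
    rw [show Set.range w = Set.range b from rfl, b.interior_convexHull]
    intro i
    rw [← h0, b.coord_apply_combination_of_mem (mem_univ i) hw]
    exact div_pos (hμ i) hs

variable {n : ℕ} {w : Fin (n + 1) → E}

theorem linearIndependent_comp_succAbove_of_zero_mem_interior (hE : Module.finrank ℝ E = n)
    (h : (0 : E) ∈ interior (convexHull ℝ (Set.range w))) (i : Fin (n + 1)) :
    LinearIndependent ℝ (w ∘ i.succAbove) := by
  obtain ⟨hw, μ, hμ, hrel⟩ := (zero_mem_interior_convexHull_iff (by simp [hE]) w).mp h
  exact (affineIndependent_iff_linearIndependent_comp_succAbove hμ hrel i).mp hw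

theorem zero_mem_interior_convexHull_iff_of_sum_smul_eq_zero (hE : Module.finrank ℝ E = n)
    {c : Fin (n + 1) → ℝ} (hc : ∀ j, c j ≠ 0) (hrel : ∑ j, c j • w j = 0) {i : Fin (n + 1)}
    (hw : LinearIndependent ℝ (w ∘ i.succAbove)) :
    (0 : E) ∈ interior (convexHull ℝ (Set.range w)) ↔ (∀ j, 0 < c j) ∨ (∀ j, c j < 0) := by
  rw [zero_mem_interior_convexHull_iff (by simp [hE])]
  constructor
  · rintro ⟨-, μ, hμ, hμrel⟩
    have key (j) : c i * μ j = μ i * c j :=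
      congrFun (smul_eq_smul_of_sum_smul_eq_zero hw hrel hμrel) j
    rcases (hc i).lt_or_gt with hneg | hpos
    · exact Or.inr fun j => by nlinarith [key j, hμ i, hμ j]
    · exact Or.inl fun j => by nlinarith [key j, hμ i, hμ j]
  · rintro (hpos | hneg)
    · exact ⟨(affineIndependent_iff_linearIndependent_comp_succAbove hpos hrel i).mpr hw,
        c, hpos, hrel⟩
    · have hrel' : ∑ j, (-c) j • w j = 0 := by simp [neg_smul, sum_neg_distrib, hrel]
      exact ⟨(affineIndependent_iff_linearIndependent_comp_succAbove
        (fun j => neg_pos.mpr (hneg j)) hrel' i).mpr hw, -c, fun j => neg_pos.mpr (hneg j), hrel'⟩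

end ConvexGeometry

theorem linearIndependent_iff_det_ne_zero {K m : Type*} [Field K] [Fintype m] [DecidableEq m]
    (u : m → m → K) : LinearIndependent K u ↔ (Matrix.of fun a b => u b a).det ≠ 0 := by
  rw [← isUnit_iff_ne_zero, ← Matrix.isUnit_iff_isUnit_det,
    ← Matrix.linearIndependent_cols_iff_isUnit]
  rfl

section Minors

variable {n : ℕ} (v : Fin (n + 1) → Fin n → ℝ)

def minorDet (i : Fin (n + 1)) : ℝ :=
  (Matrix.of fun a b => v (i.succAbove b) a).det

def cofactor (i : Fin (n + 1)) : ℝ :=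
  (-1) ^ (i : ℕ) * minorDet v i

theorem oriV_comp_succAbove (i : Fin (n + 1)) :
    oriV (v ∘ i.succAbove) = Real.sign (minorDet v i) := rfl

theorem linearIndependent_comp_succAbove_iff (i : Fin (n + 1)) :
    LinearIndependent ℝ (v ∘ i.succAbove) ↔ minorDet v i ≠ 0 :=
  linearIndependent_iff_det_ne_zero _

-- Expand along row `0` the matrix with rows `(v · k), (v · 0), …, (v · (n - 1))`, which vanishes
-- since rows `0` and `k + 1` coincide.
theorem sum_cofactor_smul_eq_zero : ∑ j, cofactor v j • v j = 0 := by
  funext k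
  let B : Matrix (Fin (n + 1)) (Fin (n + 1)) ℝ := Matrix.of fun a j => Fin.cases (v j k) (v j) a
  have hB : B.det = 0 :=
    Matrix.det_zero_of_row_eq (Fin.succ_ne_zero k).symm (by ext j; simp [B])
  rw [Matrix.det_succ_row_zero] at hB
  rw [Finset.sum_apply, Pi.zero_apply, ← hB]
  refine sum_congr rfl fun j _ => ?_
  simp only [B, cofactor, minorDet, Matrix.submatrix, Matrix.of_apply, Fin.cases_zero,
    Fin.cases_succ, Pi.smul_apply, smul_eq_mul]
  ring

theorem minorDet_smul (e : Fin (n + 1) → ℝ) (i : Fin (n + 1)) :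
    minorDet (fun j => e j • v j) i = (∏ l, e (i.succAbove l)) * minorDet v i := by
  have : (Matrix.of fun a b => (e (i.succAbove b) • v (i.succAbove b)) a) =
      (Matrix.of fun a b => v (i.succAbove b) a) *
        Matrix.diagonal (fun b => e (i.succAbove b)) := by
    ext a b
    simp [Matrix.mul_diagonal, mul_comm]
  rw [minorDet, minorDet, this, Matrix.det_mul, Matrix.det_diagonal, mul_comm]

end Minors

theorem Real.sign_mul (x y : ℝ) : Real.sign (x * y) = Real.sign x * Real.sign y := by
  rcases lt_trichotomy x 0 with hx | rfl | hx <;> rcases lt_trichotomy y 0 with hy | rfl | hy <;>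
    simp [*, Real.sign_of_neg, Real.sign_of_pos, mul_pos_of_neg_of_neg, mul_neg_of_pos_of_neg,
      mul_neg_of_neg_of_pos]

theorem Real.sign_prod {ι : Type*} (s : Finset ι) (f : ι → ℝ) :
    Real.sign (∏ i ∈ s, f i) = ∏ i ∈ s, Real.sign (f i) :=
  map_prod (⟨⟨Real.sign, Real.sign_one⟩, Real.sign_mul⟩ : ℝ →* ℝ) f s

theorem prod_neg_one_pow_val {n : ℕ} (he : Even n) :
    ∏ i : Fin (n + 1), (-1 : ℝ) ^ (i : ℕ) = (-1) ^ (n / 2) := by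
  obtain ⟨m, rfl⟩ := he
  have hsum : ∑ i : Fin (m + m + 1), (i : ℕ) = (m + m + 1) * m := by
    have := Finset.sum_range_id_mul_two (m + m + 1)
    rw [← Fin.sum_univ_eq_sum_range, Nat.add_sub_cancel] at this
    linarith
  rw [prod_pow_eq_pow_sum, hsum, pow_mul, Odd.neg_one_pow ⟨m, by ring⟩]
  congr 1
  omega

section BoolSign

def boolSign (b : Bool) : ℝ := if b then 1 else -1

variable {b : Bool} {x : ℝ}

theorem boolSign_mul_self : boolSign b * boolSign b = 1 := by cases b <;> simp [boolSign]

theorem boolSign_ne_zero : boolSign b ≠ 0 := by cases b <;> simp [boolSign]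

theorem boolSign_not : boolSign (!b) = -boolSign b := by cases b <;> simp [boolSign]

theorem Real.sign_boolSign : Real.sign (boolSign b) = boolSign b := by
  cases b <;> simp [boolSign, Real.sign_neg]

theorem boolSign_decide_pos (hx : x ≠ 0) : boolSign (decide (0 < x)) = Real.sign x := by
  rcases hx.lt_or_gt with h | h <;> simp [boolSign, h, h.not_gt, Real.sign_of_neg, Real.sign_of_pos]

theorem zero_lt_boolSign_mul_iff (hx : x ≠ 0) : 0 < boolSign b * x ↔ b = decide (0 < x) := by
  rcases hx.lt_or_gt with h | h <;> cases b <;> simp [boolSign, h, h.not_gt]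

theorem boolSign_mul_neg_iff (hx : x ≠ 0) : boolSign b * x < 0 ↔ b = !decide (0 < x) := by
  rcases hx.lt_or_gt with h | h <;> cases b <;> simp [boolSign, h, h.not_gt]

end BoolSign

section Cocycles

variable {n : ℕ} (v : Fin (n + 1) → Fin n → ℝ)

theorem sign_minorDet (i : Fin (n + 1)) :
    Real.sign (minorDet v i) = (-1) ^ (i : ℕ) * Real.sign (cofactor v i) := by
  rcases neg_one_pow_eq_or ℝ (i : ℕ) with h | h <;> simp [cofactor, h, Real.sign_neg]

theorem pcoc_eq_prod_sign_cofactor (he : Even n) :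
    pcoc v = (-1) ^ (n / 2) * ∏ j, Real.sign (cofactor v j) := by
  simp only [pcoc, oriV_comp_succAbove, sign_minorDet, prod_mul_distrib, prod_neg_one_pow_val he]

theorem cofactor_ne_zero {i : Fin (n + 1)} (hi : minorDet v i ≠ 0) : cofactor v i ≠ 0 :=
  mul_ne_zero (pow_ne_zero _ (by norm_num)) hi

theorem sul_eq_zero_of_minorDet_eq_zero {i : Fin (n + 1)} (hi : minorDet v i = 0) :
    sul v = 0 := by
  rw [sul, if_neg]
  intro h
  exact (linearIndependent_comp_succAbove_iff v i).mp
    (linearIndependent_comp_succAbove_of_zero_mem_interior (by simp) h i) hi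

def cofactorSigns (j : Fin (n + 1)) : Bool := decide (0 < cofactor v j)

variable {v}

theorem zero_mem_interior_boolSign_smul_iff (hgen : ∀ i, minorDet v i ≠ 0)
    (σ : Fin (n + 1) → Bool) :
    (0 : Fin n → ℝ) ∈ interior (convexHull ℝ (Set.range fun i => boolSign (σ i) • v i)) ↔
      σ = cofactorSigns v ∨ σ = fun j => !cofactorSigns v j := by
  have hc (j) : cofactor v j ≠ 0 := cofactor_ne_zero v (hgen j)
  have hrel : ∑ j, (boolSign (σ j) * cofactor v j) • boolSign (σ j) • v j = 0 := by
    simp_rw [smul_smul, mul_right_comm, boolSign_mul_self, one_mul]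
    exact sum_cofactor_smul_eq_zero v
  have hind :
      LinearIndependent ℝ ((fun i => boolSign (σ i) • v i) ∘ (0 : Fin (n + 1)).succAbove) := by
    rw [linearIndependent_comp_succAbove_iff, minorDet_smul]
    exact mul_ne_zero (prod_ne_zero_iff.mpr fun l _ => boolSign_ne_zero) (hgen 0)
  rw [zero_mem_interior_convexHull_iff_of_sum_smul_eq_zero (by simp)
    (fun j => mul_ne_zero boolSign_ne_zero (hc j)) hrel hind, funext_iff, funext_iff]
  simp only [zero_lt_boolSign_mul_iff (hc _), boolSign_mul_neg_iff (hc _), cofactorSigns]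

theorem sul_boolSign_smul_cofactorSigns (he : Even n) (hgen : ∀ i, minorDet v i ≠ 0)
    {σ : Fin (n + 1) → Bool} (hσ : σ = cofactorSigns v ∨ σ = fun j => !cofactorSigns v j) :
    sul (fun i => boolSign (σ i) • v i) = ∏ j, Real.sign (cofactor v j) := by
  have hprod : ∏ l, boolSign (σ ((0 : Fin (n + 1)).succAbove l)) =
      ∏ l, Real.sign (cofactor v ((0 : Fin (n + 1)).succAbove l)) := by
    have hc (j) : cofactor v j ≠ 0 := cofactor_ne_zero v (hgen j)
    rcases hσ with rfl | rfl
    · simp only [cofactorSigns, boolSign_decide_pos (hc _)]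
    · simp only [cofactorSigns, boolSign_not, boolSign_decide_pos (hc _), prod_neg, card_univ,
        Fintype.card_fin, he.neg_one_pow, one_mul]
  rw [sul, if_pos ((zero_mem_interior_boolSign_smul_iff hgen σ).mpr hσ), oriV_comp_succAbove,
    minorDet_smul, Real.sign_mul, Real.sign_prod]
  simp only [Real.sign_boolSign]
  rw [hprod, Fin.prod_univ_succAbove _ 0, mul_comm]
  simp [cofactor]

theorem sum_sul_boolSign_smul (he : Even n) :
    ∑ σ : Fin (n + 1) → Bool, sul (fun i => boolSign (σ i) • v i) =
      2 * ∏ j, Real.sign (cofactor v j) := by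
  by_cases hgen : ∀ i, minorDet v i ≠ 0
  · have hne : cofactorSigns v ≠ fun j => !cofactorSigns v j := fun h => by
      simpa using congrFun h 0
    rw [Fintype.sum_eq_add _ _ hne, sul_boolSign_smul_cofactorSigns he hgen (Or.inl rfl),
      sul_boolSign_smul_cofactorSigns he hgen (Or.inr rfl), two_mul]
    rintro σ ⟨h₁, h₂⟩
    rw [sul, if_neg fun h =>
      not_or.mpr ⟨h₁, h₂⟩ ((zero_mem_interior_boolSign_smul_iff hgen σ).mp h)]
  · obtain ⟨i, hi⟩ := not_forall_not.mp hgen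
    rw [prod_eq_zero (mem_univ i) (by simp [cofactor, hi]), mul_zero]
    exact sum_eq_zero fun σ _ => sul_eq_zero_of_minorDet_eq_zero _ (i := i)
      (by rw [minorDet_smul, hi, mul_zero])

theorem smi_eq_prod_sign_cofactor (he : Even n) :
    smi v = (2 ^ n)⁻¹ * ∏ j, Real.sign (cofactor v j) := by
  show (2 ^ (n + 1))⁻¹ * ∑ σ : Fin (n + 1) → Bool, sul (fun i => boolSign (σ i) • v i) = _
  rw [sum_sul_boolSign_smul he, pow_succ, mul_inv, mul_assoc, inv_mul_cancel_left₀ two_ne_zero]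

end Cocycles

theorem stmt19_general (n : ℕ) (he : Even n) (v : Fin (n + 1) → (Fin n → ℝ)) :
    pcoc v = (-1 : ℝ) ^ (n / 2) * 2 ^ n * smi v := by
  rw [pcoc_eq_prod_sign_cofactor v he, smi_eq_prod_sign_cofactor he, mul_assoc,
    mul_inv_cancel_left₀ (by positivity)]

/-- `pcoc = (−1)^{n/2} · 2^n · smi`. -/
theorem stmt19 (n : ℕ) (hn : 0 < n) (he : Even n) (v : Fin (n + 1) → (Fin n → ℝ)) :
    pcoc v = (-1 : ℝ) ^ (n / 2) * 2 ^ n * smi v :=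
  stmt19_general n he v

end
end
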